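/- Let (θ_i, θ*_i, i=0..d; φ_j, φ'_j, j=1..d) be a parameter array with d ≥ 1, and set ϑ_i = ∑_{h=0}^{i-1}(θ*_h - θ*_{d-h})/(θ*_0 - θ*_d). Then θ_i = θ_0 + (φ_i - φ'_d ϑ_i)/(θ*_{i-1} - θ*_d) for 1 ≤ i ≤ d, and θ_i = θ_d + (φ_{i+1} - φ'_1 ϑ_{i+1})/(θ*_{i+1} - θ*_0) for 0 ≤ i ≤ d-1. -/

import Mathlib

/-!
Put `γ = β - 1`. A `β`-recurrent sequence satisfies `θ k - γ θ (k + 1) + θ (k + 2) = c` for a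
constant `c`, so its reflected differences `θ k - θ (d - k)` solve the homogeneous recurrence
`x k - γ x (k + 1) + x (k + 2) = 0` and are antisymmetric under `k ↦ d - k`. Such antisymmetric
solutions form a line (one is determined by its value next to the middle index), so the reflected
differences of `θ` and `θ*` are proportional. Hence `ϑ_i` is the same for `θ` and `θ*`, and the
second formula is the defining identity of `φ_i` read backwards.

For the first formula, let `D i = (θ i - θ 0)(θ* (i - 1) - θ* d) - (θ* i - θ* 0)(θ (i - 1) - θ d)`.
A local computation shows `D k - γ D (k + 1) + D (k + 2)` is independent of `k`; together with
`D 0 = D (d + 1) = 0` and `D 1 = D d` this gives `D i = D (d + 1 - i)`, so the increments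
`D (k + 1) - D k` are again antisymmetric solutions, proportional to `θ k - θ (d - k)`. Summing,
`D i = ϑ_i D 1`, and the `φ'`-identities at `i = 1` and `i = d` turn this into the first formula.
-/

open Finset

/-- A parameter array of diameter `d` over `K`:
scalars `θ 0,…,θ d`, `θs 0,…,θs d`, `φ 1,…,φ d`, `φp 1,…,φp d`
satisfying conditions (i)–(v) of the classification theorem. -/
def IsParameterArray (K : Type*) [Field K] (d : ℕ) (θ θs φ φp : ℕ → K) : Prop :=
  (∀ i, 1 ≤ i → i ≤ d → φ i ≠ 0 ∧ φp i ≠ 0) ∧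
  (∀ i j, i ≤ d → j ≤ d → i ≠ j → θ i ≠ θ j ∧ θs i ≠ θs j) ∧
  (∀ i, 1 ≤ i → i ≤ d →
    φ i = φp 1 * (∑ h ∈ Finset.range i, (θ h - θ (d - h)) / (θ 0 - θ d))
      + (θs i - θs 0) * (θ (i - 1) - θ d)) ∧
  (∀ i, 1 ≤ i → i ≤ d →
    φp i = φ 1 * (∑ h ∈ Finset.range i, (θ h - θ (d - h)) / (θ 0 - θ d))
      + (θs i - θs 0) * (θ (d - i + 1) - θ 0)) ∧
  (∃ β : K, ∀ i, 2 ≤ i → i + 1 ≤ d →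
    (θ (i - 2) - θ (i + 1)) / (θ (i - 1) - θ i) = β ∧
    (θs (i - 2) - θs (i + 1)) / (θs (i - 1) - θs i) = β)

section

variable {K : Type*} [Field K]

def IsRecurrentOn (b : K) (n : ℕ) (x : ℕ → K) : Prop :=
  ∀ k, k + 2 ≤ n → x k - b * x (k + 1) + x (k + 2) = 0

namespace IsRecurrentOn

variable {b : K} {n : ℕ} {x : ℕ → K}

theorem eq_zero (hx : IsRecurrentOn b n x) (h0 : x 0 = 0) (h1 : x 1 = 0) :
    ∀ k ≤ n, x k = 0 := by
  intro k
  induction k using Nat.twoStepInduction with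
  | zero => exact fun _ => h0
  | one => exact fun _ => h1
  | more k ih0 ih1 =>
    intro hk
    linear_combination hx k hk - ih0 (by omega) + b * ih1 (by omega)

theorem reflect (hx : IsRecurrentOn b n x) {m : ℕ} (hm : m ≤ n) :
    IsRecurrentOn b m (fun k => x (m - k)) := by
  intro k hk
  obtain ⟨j, rfl⟩ : ∃ j, m = k + 2 + j := ⟨m - k - 2, by omega⟩
  have h := hx j (by omega)
  simp only
  rw [show k + 2 + j - k = j + 2 by omega, show k + 2 + j - (k + 1) = j + 1 by omega,
    show k + 2 + j - (k + 2) = j by omega]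
  linear_combination h

end IsRecurrentOn

def antidiagDiff (n : ℕ) (z : ℕ → K) (k : ℕ) : K := z k - z (n - k)

section Antidiagonal

variable {b : K} {n : ℕ} {z w : ℕ → K}

/- With `p = (n - 1) / 2`, antisymmetry gives `x (p + 1) = 0` (`n` even) or `x (p + 1) = -x p`
(`n` odd), so the recurrence can be run downwards from the pair `p + 1, p`. -/
theorem antidiagDiff_eq_zero_of_mid (hz : IsRecurrentOn b n (antidiagDiff n z))
    (hmid : antidiagDiff n z ((n - 1) / 2) = 0) : ∀ k ≤ n, antidiagDiff n z k = 0 := by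
  rcases Nat.eq_zero_or_pos n with rfl | hn
  · intro k hk
    obtain rfl : k = 0 := by omega
    simp [antidiagDiff]
  set p := (n - 1) / 2 with hp
  have hp1 : antidiagDiff n z (p + 1) = 0 := by
    rcases Nat.even_or_odd' n with ⟨m, rfl | rfl⟩
    · simp only [antidiagDiff]
      rw [show 2 * m - (p + 1) = p + 1 by omega, sub_self]
    · simp only [antidiagDiff] at hmid ⊢
      rw [show 2 * m + 1 - (p + 1) = p by omega]
      rw [show 2 * m + 1 - p = p + 1 by omega] at hmid
      linear_combination -hmid
  have hlow : ∀ k ≤ p + 1, antidiagDiff n z k = 0 := by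
    have h := (hz.reflect (m := p + 1) (by omega)).eq_zero (by simpa using hp1)
      (by simpa using hmid)
    intro k hk
    simpa [show p + 1 - (p + 1 - k) = k by omega] using h (p + 1 - k) (by omega)
  intro k hk
  by_cases hkp : k ≤ p + 1
  · exact hlow k hkp
  · have h := hlow (n - k) (by omega)
    simp only [antidiagDiff, show n - (n - k) = k by omega] at h ⊢
    linear_combination -h

theorem antidiagDiff_mul_comm (hz : IsRecurrentOn b n (antidiagDiff n z))
    (hw : IsRecurrentOn b n (antidiagDiff n w)) {j k : ℕ} (hj : j ≤ n) (hk : k ≤ n) :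
    antidiagDiff n z k * antidiagDiff n w j = antidiagDiff n w k * antidiagDiff n z j := by
  set p := (n - 1) / 2
  have hmid : ∀ k ≤ n,
      antidiagDiff n z k * antidiagDiff n w p = antidiagDiff n w k * antidiagDiff n z p := by
    have hu := antidiagDiff_eq_zero_of_mid
      (n := n) (z := fun i => antidiagDiff n w p * z i - antidiagDiff n z p * w i) (b := b) ?_ ?_
    · intro k hk
      have h := hu k hk
      simp only [antidiagDiff] at h ⊢
      linear_combination h
    · intro i hi
      have h1 := hz i hi
      have h2 := hw i hi
      simp only [antidiagDiff] at h1 h2 ⊢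
      linear_combination (w p - w (n - p)) * h1 - (z p - z (n - p)) * h2
    · simp only [antidiagDiff]
      ring
  by_cases hp : antidiagDiff n z p = 0
  · have h0 := antidiagDiff_eq_zero_of_mid hz hp
    rw [h0 k hk, h0 j hj, zero_mul, mul_zero]
  · apply mul_right_cancel₀ hp
    linear_combination antidiagDiff n z j * hmid k hk - antidiagDiff n z k * hmid j hj

end Antidiagonal

def IsAffineRecurrent (b c : K) (f : ℕ → K) : Prop :=
  ∀ k, f k - b * f (k + 1) + f (k + 2) = c

def cornerDet (d : ℕ) (f g : ℕ → K) (i : ℕ) : K :=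
  (f i - f 0) * (g (i - 1) - g d) - (g i - g 0) * (f (i - 1) - f d)

@[simp]
theorem cornerDet_zero (d : ℕ) (f g : ℕ → K) : cornerDet d f g 0 = 0 := by
  simp [cornerDet]

namespace IsAffineRecurrent

variable {b c c' : K} {f g : ℕ → K}

theorem apply_add_two (hf : IsAffineRecurrent b c f) (k : ℕ) :
    f (k + 2) = c - f k + b * f (k + 1) := by
  linear_combination hf k

theorem isRecurrentOn_antidiagDiff (hf : IsAffineRecurrent b c f) (d : ℕ) :
    IsRecurrentOn b d (antidiagDiff d f) := by
  intro k hk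
  obtain ⟨j, rfl⟩ : ∃ j, d = k + 2 + j := ⟨d - k - 2, by omega⟩
  simp only [antidiagDiff, show k + 2 + j - k = j + 2 by omega,
    show k + 2 + j - (k + 1) = j + 1 by omega, show k + 2 + j - (k + 2) = j by omega]
  linear_combination hf k - hf j

theorem antidiag_mul_comm (hf : IsAffineRecurrent b c f) (hg : IsAffineRecurrent b c' g)
    {d k : ℕ} (hk : k ≤ d) : (f k - f (d - k)) * (g 0 - g d) = (g k - g (d - k)) * (f 0 - f d) := by
  simpa [antidiagDiff] using antidiagDiff_mul_comm (hf.isRecurrentOn_antidiagDiff d)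
    (hg.isRecurrentOn_antidiagDiff d) (Nat.zero_le d) hk

theorem cornerDet_rec_succ (hf : IsAffineRecurrent b c f) (hg : IsAffineRecurrent b c' g)
    (d j : ℕ) :
    cornerDet d f g (j + 1) - b * cornerDet d f g (j + 2) + cornerDet d f g (j + 3) =
      cornerDet d f g j - b * cornerDet d f g (j + 1) + cornerDet d f g (j + 2) := by
  rcases j with _ | i
  · have f2 : f 2 = c - f 0 + b * f 1 := hf.apply_add_two 0
    have f3 : f 3 = c - f 1 + b * f 2 := hf.apply_add_two 1
    have g2 : g 2 = c' - g 0 + b * g 1 := hg.apply_add_two 0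
    have g3 : g 3 = c' - g 1 + b * g 2 := hg.apply_add_two 1
    simp only [cornerDet, zero_add, Nat.sub_self, Nat.add_one_sub_one,
      show 3 - 1 = 2 by omega]
    rw [f3, g3, f2, g2]
    ring
  · have f2 : f (i + 2) = c - f i + b * f (i + 1) := hf.apply_add_two i
    have f3 : f (i + 3) = c - f (i + 1) + b * f (i + 2) := hf.apply_add_two (i + 1)
    have f4 : f (i + 4) = c - f (i + 2) + b * f (i + 3) := hf.apply_add_two (i + 2)
    have g2 : g (i + 2) = c' - g i + b * g (i + 1) := hg.apply_add_two i
    have g3 : g (i + 3) = c' - g (i + 1) + b * g (i + 2) := hg.apply_add_two (i + 1)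
    have g4 : g (i + 4) = c' - g (i + 2) + b * g (i + 3) := hg.apply_add_two (i + 2)
    show cornerDet d f g (i + 2) - b * cornerDet d f g (i + 3) + cornerDet d f g (i + 4) =
      cornerDet d f g (i + 1) - b * cornerDet d f g (i + 2) + cornerDet d f g (i + 3)
    simp only [cornerDet, Nat.add_sub_cancel, show i + 2 - 1 = i + 1 by omega,
      show i + 3 - 1 = i + 2 by omega, show i + 4 - 1 = i + 3 by omega]
    rw [f4, g4, f3, g3, f2, g2]
    ring

theorem cornerDet_rec_eq (hf : IsAffineRecurrent b c f) (hg : IsAffineRecurrent b c' g)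
    (d j : ℕ) :
    cornerDet d f g j - b * cornerDet d f g (j + 1) + cornerDet d f g (j + 2) =
      -b * cornerDet d f g 1 + cornerDet d f g 2 := by
  induction j with
  | zero => simp
  | succ j ih => rw [← ih]; exact cornerDet_rec_succ hf hg d j

theorem cornerDet_symm (hf : IsAffineRecurrent b c f) (hg : IsAffineRecurrent b c' g)
    {d i : ℕ} (hi : i ≤ d + 1) : cornerDet d f g (d + 1 - i) = cornerDet d f g i := by
  have hrec : IsRecurrentOn b (d + 1) (antidiagDiff (d + 1) (cornerDet d f g)) := by
    intro k hk
    obtain ⟨j, rfl⟩ : ∃ j, d = k + 1 + j := ⟨d - k - 1, by omega⟩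
    simp only [antidiagDiff, show k + 1 + j + 1 - k = j + 2 by omega,
      show k + 1 + j + 1 - (k + 1) = j + 1 by omega, show k + 1 + j + 1 - (k + 2) = j by omega]
    linear_combination cornerDet_rec_eq hf hg (k + 1 + j) k - cornerDet_rec_eq hf hg (k + 1 + j) j
  have h1 : antidiagDiff (d + 1) (cornerDet d f g) 1 = 0 := by
    rcases Nat.eq_zero_or_pos d with rfl | hd
    · simp [antidiagDiff, cornerDet]
    have hA := hf.antidiag_mul_comm hg (d := d) (k := 1) hd
    simp only [antidiagDiff, cornerDet, Nat.add_sub_cancel, Nat.sub_self]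
    linear_combination hA
  have h := hrec.eq_zero (by simp [antidiagDiff, cornerDet]) h1 i hi
  simp only [antidiagDiff] at h
  linear_combination -h

theorem cornerDet_mul (hf : IsAffineRecurrent b c f) (hg : IsAffineRecurrent b c' g)
    {d i : ℕ} (hi : i ≤ d + 1) :
    cornerDet d f g i * (f 0 - f d) = (∑ k ∈ range i, (f k - f (d - k))) * cornerDet d f g 1 := by
  have hE : ∀ k ≤ d, antidiagDiff d (fun k => cornerDet d f g (k + 1)) k =
      cornerDet d f g (k + 1) - cornerDet d f g k := by
    intro k hk
    simp only [antidiagDiff]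
    rw [show d - k + 1 = d + 1 - k by omega, cornerDet_symm hf hg (by omega)]
  have hrec : IsRecurrentOn b d (antidiagDiff d (fun k => cornerDet d f g (k + 1))) := by
    intro k hk
    rw [hE k (by omega), hE (k + 1) (by omega), hE (k + 2) (by omega)]
    linear_combination cornerDet_rec_succ hf hg d k
  induction i with
  | zero => simp
  | succ i ih =>
    have h := antidiagDiff_mul_comm hrec (hf.isRecurrentOn_antidiagDiff d) (Nat.zero_le d)
      (k := i) (by omega)
    rw [hE i (by omega), hE 0 (Nat.zero_le d)] at h
    simp only [antidiagDiff, cornerDet_zero, Nat.sub_zero, sub_zero, zero_add] at h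
    rw [sum_range_succ]
    linear_combination ih (by omega) + h

end IsAffineRecurrent

def affineRecSeq (b c x₀ x₁ : K) : ℕ → K
  | 0 => x₀
  | 1 => x₁
  | n + 2 => c - affineRecSeq b c x₀ x₁ n + b * affineRecSeq b c x₀ x₁ (n + 1)

theorem isAffineRecurrent_affineRecSeq (b c x₀ x₁ : K) :
    IsAffineRecurrent b c (affineRecSeq b c x₀ x₁) := fun k => by
  rw [affineRecSeq]
  ring

def IsBetaRecurrentOn (β : K) (d : ℕ) (f : ℕ → K) : Prop :=
  ∀ i, i + 3 ≤ d → f i - f (i + 3) = β * (f (i + 1) - f (i + 2))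

namespace IsBetaRecurrentOn

variable {β : K} {d : ℕ} {f g : ℕ → K}

theorem exists_affineRecurrent (hf : IsBetaRecurrentOn β d f) :
    ∃ F c, IsAffineRecurrent (β - 1) c F ∧ ∀ k ≤ d, F k = f k := by
  set c := f 0 - (β - 1) * f 1 + f 2
  have hc : ∀ k, k + 2 ≤ d → f k - (β - 1) * f (k + 1) + f (k + 2) = c := by
    intro k hk
    induction k with
    | zero => rfl
    | succ k ih => linear_combination ih (by omega) - hf k (by omega)
  refine ⟨affineRecSeq (β - 1) c (f 0) (f 1), c, isAffineRecurrent_affineRecSeq _ _ _ _, ?_⟩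
  intro k
  induction k using Nat.twoStepInduction with
  | zero => exact fun _ => rfl
  | one => exact fun _ => rfl
  | more k ih0 ih1 =>
    intro hk
    rw [affineRecSeq, ih0 (by omega), ih1 (by omega)]
    linear_combination -hc k hk

theorem antidiag_mul_comm (hf : IsBetaRecurrentOn β d f) (hg : IsBetaRecurrentOn β d g)
    {k : ℕ} (hk : k ≤ d) : (f k - f (d - k)) * (g 0 - g d) = (g k - g (d - k)) * (f 0 - f d) := by
  obtain ⟨F, c, hF, hFf⟩ := hf.exists_affineRecurrent
  obtain ⟨G, c', hG, hGg⟩ := hg.exists_affineRecurrent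
  have h := hF.antidiag_mul_comm hG hk
  simp (disch := omega) only [hFf, hGg] at h
  exact h

theorem sum_antidiag_div_eq (hf : IsBetaRecurrentOn β d f) (hg : IsBetaRecurrentOn β d g)
    (hf0 : f 0 ≠ f d) (hg0 : g 0 ≠ g d) {i : ℕ} (hi : i ≤ d + 1) :
    ∑ h ∈ range i, (f h - f (d - h)) / (f 0 - f d) =
      ∑ h ∈ range i, (g h - g (d - h)) / (g 0 - g d) := by
  refine sum_congr rfl fun h hh => ?_
  rw [div_eq_div_iff (sub_ne_zero.2 hf0) (sub_ne_zero.2 hg0)]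
  exact hf.antidiag_mul_comm hg (by rw [mem_range] at hh; omega)

theorem cornerDet_eq (hf : IsBetaRecurrentOn β d f) (hg : IsBetaRecurrentOn β d g)
    (hf0 : f 0 ≠ f d) {i : ℕ} (hi1 : 1 ≤ i) (hi : i ≤ d) :
    cornerDet d f g i = (∑ h ∈ range i, (f h - f (d - h)) / (f 0 - f d)) * cornerDet d f g 1 := by
  obtain ⟨F, c, hF, hFf⟩ := hf.exists_affineRecurrent
  obtain ⟨G, c', hG, hGg⟩ := hg.exists_affineRecurrent
  have h := hF.cornerDet_mul hG (d := d) (i := i) (by omega)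
  have hsum : ∑ k ∈ range i, (F k - F (d - k)) = ∑ k ∈ range i, (f k - f (d - k)) :=
    sum_congr rfl fun k hk => by
      rw [mem_range] at hk
      rw [hFf k (by omega), hFf (d - k) (by omega)]
  rw [hsum] at h
  simp (disch := omega) only [cornerDet, hFf, hGg] at h
  rw [← sum_div, div_mul_eq_mul_div, eq_div_iff (sub_ne_zero.2 hf0)]
  simpa only [cornerDet] using h

end IsBetaRecurrentOn

theorem sum_range_sub_reflect (f : ℕ → K) (d : ℕ) :
    ∑ h ∈ range d, (f h - f (d - h)) = f 0 - f d := by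
  have hrefl : ∑ h ∈ range d, f (d - h) = ∑ h ∈ range d, f (h + 1) := by
    rw [← sum_range_reflect (fun h => f (h + 1)) d]
    exact sum_congr rfl fun j hj => by rw [mem_range] at hj; congr 1; omega
  rw [sum_sub_distrib, hrefl, ← sum_sub_distrib, sum_range_sub']

theorem isBetaRecurrentOn_of_div_eq {β : K} {d : ℕ} {f : ℕ → K}
    (hinj : ∀ i j, i ≤ d → j ≤ d → i ≠ j → f i ≠ f j)
    (h : ∀ i, 2 ≤ i → i + 1 ≤ d → (f (i - 2) - f (i + 1)) / (f (i - 1) - f i) = β) :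
    IsBetaRecurrentOn β d f := by
  intro i hi
  have hβ := h (i + 2) (by omega) (by omega)
  rw [div_eq_iff (sub_ne_zero.2 (hinj _ _ (by omega) (by omega) (by omega)))] at hβ
  simpa [show i + 2 - 1 = i + 1 by omega, add_assoc] using hβ

namespace IsParameterArray

variable {d : ℕ} {θ θs φ φp : ℕ → K}

theorem exists_isBetaRecurrentOn (hpa : IsParameterArray K d θ θs φ φp) :
    ∃ β, IsBetaRecurrentOn β d θ ∧ IsBetaRecurrentOn β d θs := by
  obtain ⟨-, hdist, -, -, β, hβ⟩ := hpa
  exact ⟨β, isBetaRecurrentOn_of_div_eq (fun i j hi hj hij => (hdist i j hi hj hij).1)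
      fun i hi hid => (hβ i hi hid).1,
    isBetaRecurrentOn_of_div_eq (fun i j hi hj hij => (hdist i j hi hj hij).2)
      fun i hi hid => (hβ i hi hid).2⟩

theorem sum_div_eq (hpa : IsParameterArray K d θ θs φ φp) {i : ℕ} (hi1 : 1 ≤ i)
    (hi : i ≤ d) :
    ∑ h ∈ range i, (θ h - θ (d - h)) / (θ 0 - θ d) =
      ∑ h ∈ range i, (θs h - θs (d - h)) / (θs 0 - θs d) := by
  obtain ⟨β, hθ, hθs⟩ := hpa.exists_isBetaRecurrentOn
  have h0d := hpa.2.1 0 d (Nat.zero_le d) le_rfl (by omega)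
  exact hθ.sum_antidiag_div_eq hθs h0d.1 h0d.2 (by omega)

theorem phi_sub_phip_mul_eq (hpa : IsParameterArray K d θ θs φ φp) {i : ℕ} (hi1 : 1 ≤ i)
    (hi : i ≤ d) :
    φ i - φp d * ∑ h ∈ range i, (θ h - θ (d - h)) / (θ 0 - θ d) =
      (θ i - θ 0) * (θs (i - 1) - θs d) := by
  obtain ⟨β, hθ, hθs⟩ := hpa.exists_isBetaRecurrentOn
  obtain ⟨-, hdist, hφ, hφp, -⟩ := hpa
  have hθ0 := hdist 0 d (Nat.zero_le d) le_rfl (by omega)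
  have hD := hθ.cornerDet_eq hθs hθ0.1 hi1 hi
  have h1 := hφp 1 le_rfl (by omega)
  have hd := hφp d (by omega) le_rfl
  rw [sum_range_one, Nat.sub_zero, div_self (sub_ne_zero.2 hθ0.1),
    show d - 1 + 1 = d by omega] at h1
  rw [← sum_div, sum_range_sub_reflect, div_self (sub_ne_zero.2 hθ0.1), Nat.sub_self,
    zero_add] at hd
  simp only [cornerDet, Nat.sub_self] at hD
  linear_combination hφ i hi1 hi + (∑ h ∈ range i, (θ h - θ (d - h)) / (θ 0 - θ d)) * (h1 - hd) - hD

end IsParameterArray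

end

theorem parameter_array_theta_formulas_general {K : Type*} [Field K] (d : ℕ)
    (θ θs φ φp : ℕ → K) (hpa : IsParameterArray K d θ θs φ φp) :
    (∀ i, 1 ≤ i → i ≤ d →
      θ i = θ 0 +
        (φ i - φp d * (∑ h ∈ Finset.range i, (θs h - θs (d - h)) / (θs 0 - θs d))) /
          (θs (i - 1) - θs d)) ∧
    (∀ i, i + 1 ≤ d →
      θ i = θ d +
        (φ (i + 1) - φp 1 * (∑ h ∈ Finset.range (i + 1), (θs h - θs (d - h)) / (θs 0 - θs d))) /
          (θs (i + 1) - θs 0)) := by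
  refine ⟨fun i hi1 hid => ?_, fun i hid => ?_⟩
  · have hθs := (hpa.2.1 (i - 1) d (by omega) le_rfl (by omega)).2
    rw [← hpa.sum_div_eq hi1 hid, hpa.phi_sub_phip_mul_eq hi1 hid,
      mul_div_cancel_right₀ _ (sub_ne_zero.2 hθs)]
    ring
  · have hθs := (hpa.2.1 (i + 1) 0 hid (Nat.zero_le d) (by omega)).2
    rw [← hpa.sum_div_eq (by omega) hid, hpa.2.2.1 (i + 1) (by omega) hid, Nat.add_sub_cancel,
      add_sub_cancel_left, mul_div_cancel_left₀ _ (sub_ne_zero.2 hθs)]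
    ring

theorem parameter_array_theta_formulas {K : Type*} [Field K] (d : ℕ) (hd : 1 ≤ d)
    (θ θs φ φp : ℕ → K) (hpa : IsParameterArray K d θ θs φ φp) :
    (∀ i, 1 ≤ i → i ≤ d →
      θ i = θ 0 +
        (φ i - φp d * (∑ h ∈ Finset.range i, (θs h - θs (d - h)) / (θs 0 - θs d))) /
          (θs (i - 1) - θs d)) ∧
    (∀ i, i + 1 ≤ d →
      θ i = θ d +
        (φ (i + 1) - φp 1 * (∑ h ∈ Finset.range (i + 1), (θs h - θs (d - h)) / (θs 0 - θs d))) /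
          (θs (i + 1) - θs 0)) :=
  parameter_array_theta_formulas_general d θ θs φ φp hpa
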